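/- Let α ∈ (0,1), N > 1, M > 0, and let (u_k)_{k∈ℕ} be a decreasing sequence of positive real numbers such that u_{k+1}^{1−α} ≤ N^k M u_k for every k ∈ ℕ. If u₀ ≤ N^{−(1−α)/α²} M^{−1/α}, then u_k → 0 as k → ∞. -/
import Mathlib


open Filter
open scoped Topology

/-- De Giorgi iteration lemma: if `(u_k)` is a decreasing sequence of positive numbers
with `u_{k+1}^{1−α} ≤ Nᵏ M u_k` and `u₀ ≤ N^{−(1−α)/α²} M^{−1/α}`, then `u_k → 0`. -/
theorem stmt7 (α N M : ℝ) (hα : 0 < α) (hα1 : α < 1) (hN : 1 < N) (hM : 0 < M)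
    (u : ℕ → ℝ) (hpos : ∀ k, 0 < u k) (hdec : ∀ k, u (k + 1) ≤ u k)
    (hiter : ∀ k : ℕ, u (k + 1) ^ (1 - α) ≤ N ^ k * M * u k)
    (hinit : u 0 ≤ N ^ (-(1 - α) / α ^ 2) * M ^ (-(1 : ℝ) / α)) :
    Tendsto u atTop (𝓝 0) := by
  have hN0 : (0:ℝ) < N := lt_trans one_pos hN
  have hβ : (0:ℝ) < 1 - α := by linarith
  set L : ℝ := N ^ (-(1 - α) / α ^ 2) * M ^ (-(1 : ℝ) / α) with hL
  have hLpos : 0 < L := by positivity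
  have key : ∀ k : ℕ, u k ≤ L * N ^ (-(k:ℝ)/α) := by
    intro k
    induction k with
    | zero => simpa using hinit
    | succ k ih =>
      have hR : (0:ℝ) < L * N ^ (-((k:ℝ)+1)/α) := by positivity
      push_cast
      rw [← Real.rpow_le_rpow_iff (hpos _).le hR.le hβ]
      calc u (k+1) ^ (1-α) ≤ N ^ k * M * u k := hiter k
        _ ≤ N ^ k * M * (L * N ^ (-(k:ℝ)/α)) := by
            apply mul_le_mul_of_nonneg_left ih (by positivity)
        _ = (L * N ^ (-((k:ℝ)+1)/α)) ^ (1-α) := by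
            have hα' : α ≠ 0 := hα.ne'
            rw [Real.mul_rpow hLpos.le (by positivity), hL,
              Real.mul_rpow (by positivity) (by positivity),
              ← Real.rpow_natCast N k,
              ← Real.rpow_mul hN0.le, ← Real.rpow_mul hM.le, ← Real.rpow_mul hN0.le]
            have e1 : N ^ (k:ℝ) * M * (N ^ (-(1-α)/α^2) * M ^ ((-1:ℝ)/α) * N ^ (-(k:ℝ)/α))
                = N ^ ((k:ℝ) + (-(1-α)/α^2) + (-(k:ℝ)/α)) * M ^ (1 + (-1:ℝ)/α) := by
              rw [Real.rpow_add hN0, Real.rpow_add hN0, Real.rpow_add hM, Real.rpow_one]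
              ring
            have e2 : N ^ (-(1-α)/α^2 * (1-α)) * M ^ ((-1:ℝ)/α * (1-α))
                  * N ^ (-((k:ℝ)+1)/α * (1-α))
                = N ^ (-(1-α)/α^2 * (1-α) + -((k:ℝ)+1)/α * (1-α)) * M ^ ((-1:ℝ)/α * (1-α)) := by
              rw [Real.rpow_add hN0]; ring
            rw [show (-1:ℝ)/α = -(1:ℝ)/α by ring] at e1 e2
            rw [e1, e2]
            congr 1 <;> [skip; skip] <;> (congr 1; field_simp; ring)
  have hr : N ^ (-(1:ℝ)/α) < 1 :=
    Real.rpow_lt_one_of_one_lt_of_neg hN (div_neg_of_neg_of_pos (by norm_num) hα)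
  have hr0 : (0:ℝ) ≤ N ^ (-(1:ℝ)/α) := (Real.rpow_pos_of_pos hN0 _).le
  have hub : ∀ k, u k ≤ L * (N ^ (-(1:ℝ)/α)) ^ k := by
    intro k
    have := key k
    rwa [← Real.rpow_natCast (N ^ (-(1:ℝ)/α)) k, ← Real.rpow_mul hN0.le,
      show -(1:ℝ)/α * k = -(k:ℝ)/α by ring]
  have htend : Tendsto (fun k => L * (N ^ (-(1:ℝ)/α)) ^ k) atTop (𝓝 0) := by
    have := tendsto_pow_atTop_nhds_zero_of_lt_one hr0 hr
    simpa using this.const_mul L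
  exact squeeze_zero (fun k => (hpos k).le) hub htend
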